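/- arXiv:2502.01585 — 5 statements merged into one kernel-verified Lean document; each statement's English description precedes it below -/
import Mathlib

section
/- The squared norm of the ridge estimator is non-increasing in the regularization parameter: for fixed Z ∈ ℝ^{n×p} and y ∈ ℝⁿ, the map λ ↦ ‖(ZᵀZ + λI)⁻¹Zᵀy‖² has derivative −2 yᵀZ(ZᵀZ + λI)⁻³Zᵀy ≤ 0 for all λ > 0; in particular it is monotone non-increasing on (0, ∞). -/
open Matrix

/-!
With `B(λ) = (ZᵀZ + λI)⁻¹` and `b = Zᵀy`, the resolvent identity gives `B'(λ) = -B(λ)²`, so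
`d/dλ ‖B b‖² = -2 ⟪B b, B² b⟫ = -2 bᵀB³b`. Since `B(λ)` is symmetric positive definite for
`λ > 0`, `⟪B b, B (B b)⟫ ≥ 0`, and the mean value theorem turns the sign of the derivative into
monotonicity.
-/

theorem HasDerivAt.sum_sq {ι : Type*} [Fintype ι] {f : ℝ → ι → ℝ} {f' : ι → ℝ} {x : ℝ}
    (hf : HasDerivAt f f' x) :
    HasDerivAt (fun t => ∑ i, f t i ^ 2) (2 * (f x ⬝ᵥ f')) x := by
  have := HasDerivAt.fun_sum fun i (_ : i ∈ Finset.univ) =>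
    (hasDerivAt_pi.mp hf i).fun_pow 2
  simpa [dotProduct, Finset.mul_sum, mul_comm, mul_left_comm, mul_assoc] using this

theorem antitoneOn_of_hasDerivAt_nonpos {D : Set ℝ} (hD : Convex ℝ D) {f f' : ℝ → ℝ}
    (hf : ∀ x ∈ D, HasDerivAt f (f' x) x) (hf' : ∀ x ∈ D, f' x ≤ 0) :
    AntitoneOn f D :=
  antitoneOn_of_hasDerivWithinAt_nonpos hD
    (fun x hx => (hf x hx).continuousAt.continuousWithinAt)
    (fun x hx => (hf x (interior_subset hx)).hasDerivWithinAt)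
    (fun x hx => hf' x (interior_subset hx))

namespace Matrix

theorem IsSymm.dotProduct_mul_mulVec {m R : Type*} [Fintype m] [CommSemiring R]
    {B : Matrix m m R} (hB : B.IsSymm) (C : Matrix m m R) (v w : m → R) :
    v ⬝ᵥ ((B * C) *ᵥ w) = (B *ᵥ v) ⬝ᵥ (C *ᵥ w) := by
  rw [← mulVec_mulVec, dotProduct_mulVec, ← mulVec_transpose, hB.eq]

variable {m : Type*} [Fintype m] [DecidableEq m]

theorem posDef_transpose_mul_self_add_smul_one {ι : Type*} [Fintype ι] (Z : Matrix ι m ℝ)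
    {lam : ℝ} (hlam : 0 < lam) : (Zᵀ * Z + lam • (1 : Matrix m m ℝ)).PosDef := by
  simpa using PosDef.posSemidef_add (posSemidef_conjTranspose_mul_self Z) (PosDef.one.smul hlam)

theorem hasDerivAt_inv_add_smul_one_mulVec (A : Matrix m m ℝ) (b : m → ℝ) {lam : ℝ}
    (hA : IsUnit (A + lam • (1 : Matrix m m ℝ))) :
    HasDerivAt (fun t : ℝ => (A + t • (1 : Matrix m m ℝ))⁻¹ *ᵥ b)
      (-((A + lam • 1)⁻¹ * (A + lam • 1)⁻¹) *ᵥ b) lam := by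
  -- any norm on the finite-dimensional matrix algebra serves to differentiate `Ring.inverse`
  let _ : NormedRing (Matrix m m ℝ) := Matrix.linftyOpNormedRing
  let _ : NormedAlgebra ℝ (Matrix m m ℝ) := Matrix.linftyOpNormedAlgebra
  obtain ⟨u, hu⟩ := hA
  have hshift : HasDerivAt (fun t : ℝ => A + t • (1 : Matrix m m ℝ)) 1 lam :=
    (((hasDerivAt_id lam).smul_const _).const_add A).congr_deriv (one_smul _ _)
  have hinv := hasFDerivAt_ringInverse (𝕜 := ℝ) u
  rw [hu] at hinv
  have h := (((mulVecBilin ℝ ℝ).flip b).toContinuousLinearMap.hasFDerivAt).comp_hasDerivAt lam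
    (hinv.comp_hasDerivAt lam hshift)
  simp only [nonsing_inv_eq_ringInverse]
  rw [← hu, Ring.inverse_unit]
  exact h.congr_deriv (by
    simp only [_root_.neg_apply, ContinuousLinearMap.mulLeftRight_apply, mul_one]; rfl)

end Matrix

section Ridge

variable {ι m : Type*} [Fintype ι] [Fintype m] [DecidableEq m]

theorem ridge_cube_form_eq (Z : Matrix ι m ℝ) (y : ι → ℝ) {lam : ℝ} (hlam : 0 < lam) :
    y ⬝ᵥ (Z *ᵥ (((Zᵀ * Z + lam • 1)⁻¹ * (Zᵀ * Z + lam • 1)⁻¹ *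
        (Zᵀ * Z + lam • 1)⁻¹) *ᵥ (Zᵀ *ᵥ y))) =
      ((Zᵀ * Z + lam • 1)⁻¹ *ᵥ (Zᵀ *ᵥ y)) ⬝ᵥ
        ((Zᵀ * Z + lam • 1)⁻¹ *ᵥ ((Zᵀ * Z + lam • 1)⁻¹ *ᵥ (Zᵀ *ᵥ y))) := by
  set B := (Zᵀ * Z + lam • (1 : Matrix m m ℝ))⁻¹
  have hB : B.IsSymm := by
    simpa using (posDef_transpose_mul_self_add_smul_one Z hlam).inv.isHermitian
  rw [dotProduct_mulVec, ← mulVec_transpose, mul_assoc, hB.dotProduct_mul_mulVec,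
    ← mulVec_mulVec]

theorem ridge_cube_form_nonneg (Z : Matrix ι m ℝ) (y : ι → ℝ) {lam : ℝ} (hlam : 0 < lam) :
    0 ≤ y ⬝ᵥ (Z *ᵥ (((Zᵀ * Z + lam • 1)⁻¹ * (Zᵀ * Z + lam • 1)⁻¹ *
        (Zᵀ * Z + lam • 1)⁻¹) *ᵥ (Zᵀ *ᵥ y))) := by
  rw [ridge_cube_form_eq Z y hlam]
  simpa only [star_trivial] using (posDef_transpose_mul_self_add_smul_one Z hlam).inv.posSemidef
    |>.dotProduct_mulVec_nonneg ((Zᵀ * Z + lam • 1)⁻¹ *ᵥ (Zᵀ *ᵥ y))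

theorem hasDerivAt_ridge_sq_norm (Z : Matrix ι m ℝ) (y : ι → ℝ) {lam : ℝ} (hlam : 0 < lam) :
    HasDerivAt (fun t : ℝ => ∑ i, ((Zᵀ * Z + t • (1 : Matrix m m ℝ))⁻¹ *ᵥ (Zᵀ *ᵥ y)) i ^ 2)
      (-2 * (y ⬝ᵥ (Z *ᵥ (((Zᵀ * Z + lam • 1)⁻¹ * (Zᵀ * Z + lam • 1)⁻¹ *
        (Zᵀ * Z + lam • 1)⁻¹) *ᵥ (Zᵀ *ᵥ y))))) lam := by
  refine (hasDerivAt_inv_add_smul_one_mulVec _ _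
    (posDef_transpose_mul_self_add_smul_one Z hlam).isUnit).sum_sq.congr_deriv ?_
  rw [ridge_cube_form_eq Z y hlam, neg_mulVec, dotProduct_neg, ← mulVec_mulVec]
  ring

end Ridge

/-- The squared norm of the ridge estimator is non-increasing in the
regularization parameter: its derivative is `-2 yᵀZ(ZᵀZ+λI)⁻³Zᵀy ≤ 0`, and the
map is monotone non-increasing on `(0, ∞)`. -/
theorem ridge_norm_monotone_in_lambda {n p : ℕ}
    (Z : Matrix (Fin n) (Fin p) ℝ) (y : Fin n → ℝ) :
    (∀ lam : ℝ, 0 < lam →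
      HasDerivAt
        (fun t : ℝ => ∑ i,
          ((Zᵀ * Z + t • (1 : Matrix (Fin p) (Fin p) ℝ))⁻¹ *ᵥ (Zᵀ *ᵥ y)) i ^ 2)
        (-2 * (y ⬝ᵥ (Z *ᵥ (((Zᵀ * Z + lam • 1)⁻¹ * (Zᵀ * Z + lam • 1)⁻¹ *
          (Zᵀ * Z + lam • 1)⁻¹) *ᵥ (Zᵀ *ᵥ y))))) lam) ∧
    (∀ lam : ℝ, 0 < lam →
      0 ≤ y ⬝ᵥ (Z *ᵥ (((Zᵀ * Z + lam • 1)⁻¹ * (Zᵀ * Z + lam • 1)⁻¹ *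
        (Zᵀ * Z + lam • 1)⁻¹) *ᵥ (Zᵀ *ᵥ y)))) ∧
    AntitoneOn
      (fun t : ℝ => ∑ i,
        ((Zᵀ * Z + t • (1 : Matrix (Fin p) (Fin p) ℝ))⁻¹ *ᵥ (Zᵀ *ᵥ y)) i ^ 2)
      (Set.Ioi (0 : ℝ)) := by
  refine ⟨fun lam hlam => hasDerivAt_ridge_sq_norm Z y hlam,
    fun lam hlam => ridge_cube_form_nonneg Z y hlam,
    antitoneOn_of_hasDerivAt_nonpos (convex_Ioi 0)
      (fun lam hlam => hasDerivAt_ridge_sq_norm Z y hlam) fun lam hlam => ?_⟩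
  linarith [ridge_cube_form_nonneg Z y hlam]
end

section
/- Existence and uniqueness of effective regularization: let Σ be a positive semi-definite d×d matrix and λ > 0, n > 0. Then there exists a unique t > 0 satisfying n − λ/t = Tr(Σ(Σ + tI)⁻¹), because the left-hand side is strictly increasing in t (from −∞ to n) and the right-hand side is non-increasing in t. -/
open Matrix


lemma trace_eq_sum_eig {d : ℕ} (S : Matrix (Fin d) (Fin d) ℝ) (hS : S.PosSemidef) {t : ℝ} (ht : 0 < t) :
    (S * (S + t • (1 : Matrix (Fin d) (Fin d) ℝ))⁻¹).trace
      = ∑ i, hS.1.eigenvalues i / (hS.1.eigenvalues i + t) := by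
  set U : Matrix (Fin d) (Fin d) ℝ := (hS.1.eigenvectorUnitary : Matrix (Fin d) (Fin d) ℝ) with hU
  set μ := hS.1.eigenvalues with hμdef
  have hμ : ∀ i, 0 ≤ μ i := hS.eigenvalues_nonneg
  have hUU : star U * U = 1 := Unitary.coe_star_mul_self _
  have hUU' : U * star U = 1 := Unitary.coe_mul_star_self _
  have key : ∀ A B : Matrix (Fin d) (Fin d) ℝ,
      (U * A * star U) * (U * B * star U) = U * (A * B) * star U := by
    intro A B
    simp only [Matrix.mul_assoc]
    rw [← Matrix.mul_assoc (star U) U, hUU, Matrix.one_mul]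
  have tr_conj : ∀ A : Matrix (Fin d) (Fin d) ℝ, (U * A * star U).trace = A.trace := by
    intro A
    rw [trace_mul_comm, ← Matrix.mul_assoc, hUU, Matrix.one_mul]
  have hspec : S = U * diagonal μ * star U := by
    have := hS.1.spectral_theorem
    simpa using this
  have hadd : S + t • (1 : Matrix (Fin d) (Fin d) ℝ)
      = U * diagonal (fun i => μ i + t) * star U := by
    rw [hspec]
    rw [show (diagonal (fun i => μ i + t)) = diagonal μ + t • 1 by
      rw [smul_one_eq_diagonal]; rw [← diagonal_add]]
    rw [Matrix.mul_add, Matrix.add_mul, Matrix.mul_smul, Matrix.smul_mul, Matrix.mul_one, hUU']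
  have hne : ∀ i, μ i + t ≠ 0 := fun i => by have := hμ i; positivity
  have hinv : (S + t • (1 : Matrix (Fin d) (Fin d) ℝ))⁻¹
      = U * diagonal (fun i => (μ i + t)⁻¹) * star U := by
    apply inv_eq_right_inv
    rw [hadd, key, diagonal_mul_diagonal]
    rw [show (fun i => (μ i + t) * (μ i + t)⁻¹) = fun _ => (1:ℝ) from
      funext fun i => mul_inv_cancel₀ (hne i)]
    rw [diagonal_one, Matrix.mul_one, hUU']
  rw [hinv]
  conv_lhs => rw [hspec]
  rw [key, diagonal_mul_diagonal, tr_conj, trace_diagonal]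
  simp [div_eq_mul_inv]


lemma scalar_exists_unique {d : ℕ} (μ : Fin d → ℝ) (hμ : ∀ i, 0 ≤ μ i)
    (n lam : ℝ) (hn : 0 < n) (hlam : 0 < lam) :
    ∃! t : ℝ, 0 < t ∧ n - lam / t = ∑ i, μ i / (μ i + t) := by
  set g : ℝ → ℝ := fun t => ∑ i, μ i / (μ i + t) with hg
  set F : ℝ → ℝ := fun t => n - lam / t - g t with hF
  set M : ℝ := ∑ i, μ i with hM
  have hM0 : 0 ≤ M := Finset.sum_nonneg fun i _ => hμ i
  -- monotonicity of g
  have hg_anti : ∀ s u : ℝ, 0 < s → s ≤ u → g u ≤ g s := by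
    intro s u hs hsu
    apply Finset.sum_le_sum
    intro i _
    have h1 : 0 < μ i + s := by have := hμ i; linarith
    gcongr
    exact hμ i
  have hg_nonneg : ∀ t : ℝ, 0 < t → 0 ≤ g t := by
    intro t ht
    apply Finset.sum_nonneg
    intro i _
    have h1 : 0 < μ i + t := by have := hμ i; linarith
    exact div_nonneg (hμ i) h1.le
  have hg_le : ∀ t : ℝ, 0 < t → g t ≤ M / t := by
    intro t ht
    rw [hM, Finset.sum_div]
    apply Finset.sum_le_sum
    intro i _
    gcongr
    · exact hμ i
    · linarith [hμ i]
  -- uniqueness helper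
  have key : ∀ s u : ℝ, 0 < s → s < u →
      n - lam / s = g s → n - lam / u = g u → False := by
    intro s u hs hsu h1 h2
    have hlt : lam / u < lam / s := div_lt_div_of_pos_left hlam hs hsu
    have hle : g u ≤ g s := hg_anti s u hs hsu.le
    linarith
  -- endpoints
  set a : ℝ := lam / (2 * n) with ha
  have ha0 : 0 < a := by positivity
  set b : ℝ := a + (lam + M) / n + 1 with hb
  have hab : a < b := by
    have h0 : 0 ≤ (lam + M) / n := by positivity
    rw [hb]; linarith
  have hb0 : 0 < b := lt_trans ha0 hab
  have hFa : F a < 0 := by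
    have h1 : lam / a = 2 * n := by
      rw [ha, div_div_cancel₀]; positivity
    have := hg_nonneg a ha0
    simp only [hF, h1]
    linarith
  have hFb : 0 < F b := by
    have h1 : g b ≤ M / b := hg_le b hb0
    have h2 : (lam + M) / b < n := by
      rw [div_lt_iff₀ hb0]
      have hbn : (lam + M) / n < b := by
        have : 0 < a := ha0; rw [hb]; linarith
      calc lam + M = ((lam + M)/n) * n := by field_simp
        _ < b * n := by apply mul_lt_mul_of_pos_right hbn hn
        _ = n * b := mul_comm _ _
    have h3 : lam / b + M / b = (lam + M) / b := by ring
    simp only [hF]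
    linarith
  -- continuity
  have hcont : ContinuousOn F (Set.Icc a b) := by
    apply ContinuousOn.sub
    · apply ContinuousOn.sub continuousOn_const
      exact ContinuousOn.div continuousOn_const continuousOn_id
        (fun x hx => ne_of_gt (lt_of_lt_of_le ha0 hx.1))
    · apply continuousOn_finset_sum
      intro i _
      exact ContinuousOn.div continuousOn_const (continuousOn_const.add continuousOn_id)
        (fun x hx => by have := hμ i; have := hx.1; dsimp; nlinarith)
  have hmem : (0:ℝ) ∈ Set.Icc (F a) (F b) := ⟨hFa.le, hFb.le⟩
  obtain ⟨t, htmem, htF⟩ := intermediate_value_Icc hab.le hcont hmem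
  have ht0 : 0 < t := lt_of_lt_of_le ha0 htmem.1
  have hteq : n - lam / t = g t := by
    simp only [hF] at htF; linarith
  refine ⟨t, ⟨ht0, hteq⟩, ?_⟩
  rintro y ⟨hy0, hyeq⟩
  rcases lt_trichotomy y t with h | h | h
  · exact absurd (key y t hy0 h hyeq hteq) (by simp)
  · exact h
  · exact absurd (key t y ht0 h hteq hyeq) (by simp)

/-- Existence and uniqueness of the effective regularization: for a PSD matrix
`Σ`, `λ > 0`, `n > 0`, there is a unique `t > 0` with
`n − λ/t = Tr(Σ(Σ + tI)⁻¹)`. -/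
theorem effective_regularization_exists_unique {d : ℕ}
    (S : Matrix (Fin d) (Fin d) ℝ) (hS : S.PosSemidef) (n lam : ℝ)
    (hn : 0 < n) (hlam : 0 < lam) :
    ∃! t : ℝ, 0 < t ∧
      n - lam / t = (S * (S + t • (1 : Matrix (Fin d) (Fin d) ℝ))⁻¹).trace := by
  obtain ⟨t, ⟨ht0, hteq⟩, huniq⟩ :=
    scalar_exists_unique hS.1.eigenvalues hS.eigenvalues_nonneg n lam hn hlam
  refine ⟨t, ⟨ht0, ?_⟩, ?_⟩
  · rw [trace_eq_sum_eig S hS ht0]; exact hteq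
  · rintro y ⟨hy0, hyeq⟩
    exact huniq y ⟨hy0, by rw [← trace_eq_sum_eig S hS hy0]; exact hyeq⟩
end

section
/- Isotropic min-norm interpolator, over-parameterized regime: for d > n > 0, define R(n) = ‖β‖²(d − n)/d + σ²n/(d − n) and N(n) = ‖β‖²n/d + σ²n/(d − n). Then for every such n, R = √((N − (‖β‖² − σ²))² + 4‖β‖²σ²) − σ²; equivalently, (R + σ²)² = N² − 2(‖β‖² − σ²)N + (‖β‖² + σ²)². -/
/-- Isotropic min-norm interpolator in the over-parameterized regime: the
risk–norm relation `R = √((N − (b − s))² + 4bs) − s` and its equivalent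
quadratic form. -/
theorem isotropic_minnorm_overparam_risk_norm
    (b s d n : ℝ) (hb : 0 ≤ b) (hs : 0 ≤ s) (hn : 0 < n) (hnd : n < d) :
    (b * (d - n) / d + s * n / (d - n) =
      Real.sqrt ((b * n / d + s * n / (d - n) - (b - s)) ^ 2 + 4 * b * s) - s) ∧
    ((b * (d - n) / d + s * n / (d - n) + s) ^ 2 =
      (b * n / d + s * n / (d - n)) ^ 2 -
        2 * (b - s) * (b * n / d + s * n / (d - n)) + (b + s) ^ 2) := by
  have hd : 0 < d := hn.trans hnd
  have hdn : 0 < d - n := by linarith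
  have key : (b * n / d + s * n / (d - n) - (b - s)) ^ 2 + 4 * b * s =
      (b * (d - n) / d + s * n / (d - n) + s) ^ 2 := by
    field_simp
    ring
  have hR : 0 ≤ b * (d - n) / d + s * n / (d - n) + s := by
    have h1 : 0 ≤ b * (d - n) / d := by positivity
    have h2 : 0 ≤ s * n / (d - n) := by positivity
    linarith
  constructor
  · rw [key, Real.sqrt_sq hR]; ring
  · linarith [key]
end

section
/- At the optimal regularization λ = dσ²/‖β*‖² for isotropic linear ridge regression, the deterministic equivalents satisfy the exact linear trade-off R = ‖β*‖² − N: concretely, with Σ = I_d, B_N = ‖β*‖²/(1+λ*)² + (d/(n(1+λ*)²))·(λ*²‖β*‖²/(1+λ*)²)/(1 − d/(n(1+λ*)²)), V_N = σ²(d/(1+λ*)²)/(n − d/(1+λ*)²), B_R = (λ*²‖β*‖²/(1+λ*)²)/(1 − d/(n(1+λ*)²)), V_R = V_N, and λ* solving n − λ/λ* = d/(1+λ*) with λ = dσ²/‖β*‖², one has (B_R + V_R) + (B_N + V_N) = ‖β*‖². -/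
/-!
With `t = 1 + λ*` and `D = n t² - d`, every deterministic equivalent has denominator `D`:
`B_R = n λ*² ‖β*‖² / D`, `V = d σ² / D` and `B_N = ‖β*‖² / t² + d λ*² ‖β*‖² / (t² D)`.
At the optimal `λ` the fixed-point equation reads `d σ² = ‖β*‖² λ* (n t - d) / t`,
and after this substitution `R + N = ‖β*‖²` is a polynomial identity in `n, d, λ*`.
-/

noncomputable section

namespace Ridge

def biasRisk (n d b lamstar : ℝ) : ℝ :=
  (lamstar ^ 2 * b / (1 + lamstar) ^ 2) / (1 - d / (n * (1 + lamstar) ^ 2))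

/-- `V_R = V_N`: the risk and the norm share their variance term. -/
def variance (n d σ2 lamstar : ℝ) : ℝ :=
  σ2 * (d / (1 + lamstar) ^ 2) / (n - d / (1 + lamstar) ^ 2)

def biasNorm (n d b lamstar : ℝ) : ℝ :=
  b / (1 + lamstar) ^ 2 + (d / (n * (1 + lamstar) ^ 2)) * biasRisk n d b lamstar

variable {n d b lamstar : ℝ}

theorem biasRisk_eq (hn : n ≠ 0) (ht : 1 + lamstar ≠ 0) :
    biasRisk n d b lamstar = n * lamstar ^ 2 * b / (n * (1 + lamstar) ^ 2 - d) := by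
  unfold biasRisk
  rw [one_sub_div (by positivity)]
  field_simp

theorem variance_eq (σ2 : ℝ) (ht : 1 + lamstar ≠ 0) :
    variance n d σ2 lamstar = d * σ2 / (n * (1 + lamstar) ^ 2 - d) := by
  unfold variance
  rw [sub_div' (by positivity)]
  field_simp

theorem biasNorm_eq (hn : n ≠ 0) (ht : 1 + lamstar ≠ 0) :
    biasNorm n d b lamstar = b / (1 + lamstar) ^ 2
      + d * lamstar ^ 2 * b / ((1 + lamstar) ^ 2 * (n * (1 + lamstar) ^ 2 - d)) := by
  rw [biasNorm, biasRisk_eq hn ht]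
  field_simp

theorem mul_noise_eq_of_fixedPoint {σ2 : ℝ} (hb : b ≠ 0) (hlamstar : lamstar ≠ 0)
    (ht : 1 + lamstar ≠ 0) (hsc : n - d * σ2 / b / lamstar = d / (1 + lamstar)) :
    d * σ2 = b * lamstar * (n * (1 + lamstar) - d) / (1 + lamstar) := by
  field_simp at hsc ⊢
  linarith

theorem risk_add_norm_eq {σ2 : ℝ} (hn : n ≠ 0) (hb : b ≠ 0) (hlamstar : lamstar ≠ 0)
    (ht : 1 + lamstar ≠ 0) (hD : n * (1 + lamstar) ^ 2 - d ≠ 0)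
    (hsc : n - d * σ2 / b / lamstar = d / (1 + lamstar)) :
    (biasRisk n d b lamstar + variance n d σ2 lamstar)
      + (biasNorm n d b lamstar + variance n d σ2 lamstar) = b := by
  rw [biasRisk_eq hn ht, biasNorm_eq hn ht, variance_eq σ2 ht,
    mul_noise_eq_of_fixedPoint hb hlamstar ht hsc]
  field_simp
  ring

end Ridge

end

theorem optimal_regularization_linear_tradeoff_general
    (n d σ2 b lam lamstar : ℝ)
    (hn : 0 < n) (hb : 0 < b)
    (hlam : lam = d * σ2 / b)
    (hlamstar : 0 < lamstar)
    (hcond : d < n * (1 + lamstar) ^ 2)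
    (hsc : n - lam / lamstar = d / (1 + lamstar)) :
    (((lamstar ^ 2 * b / (1 + lamstar) ^ 2) / (1 - d / (n * (1 + lamstar) ^ 2)))
      + σ2 * (d / (1 + lamstar) ^ 2) / (n - d / (1 + lamstar) ^ 2))
    + ((b / (1 + lamstar) ^ 2
        + (d / (n * (1 + lamstar) ^ 2)) *
          ((lamstar ^ 2 * b / (1 + lamstar) ^ 2) / (1 - d / (n * (1 + lamstar) ^ 2))))
      + σ2 * (d / (1 + lamstar) ^ 2) / (n - d / (1 + lamstar) ^ 2))
    = b := by
  subst hlam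
  exact Ridge.risk_add_norm_eq hn.ne' hb.ne' hlamstar.ne' (by positivity) (sub_pos.2 hcond).ne' hsc

/-- At the optimal regularization `λ = dσ²/‖β*‖²` for isotropic linear ridge
regression, the deterministic equivalents satisfy the exact linear trade-off
`R + N = ‖β*‖²`. -/
theorem optimal_regularization_linear_tradeoff
    (n d σ2 b lam lamstar : ℝ)
    (hn : 0 < n) (hd : 0 < d) (hσ : 0 < σ2) (hb : 0 < b)
    (hlam : lam = d * σ2 / b)
    (hlamstar : 0 < lamstar)
    (hcond : d < n * (1 + lamstar) ^ 2)
    (hsc : n - lam / lamstar = d / (1 + lamstar)) :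
    (((lamstar ^ 2 * b / (1 + lamstar) ^ 2) / (1 - d / (n * (1 + lamstar) ^ 2)))
      + σ2 * (d / (1 + lamstar) ^ 2) / (n - d / (1 + lamstar) ^ 2))
    + ((b / (1 + lamstar) ^ 2
        + (d / (n * (1 + lamstar) ^ 2)) *
          ((lamstar ^ 2 * b / (1 + lamstar) ^ 2) / (1 - d / (n * (1 + lamstar) ^ 2))))
      + σ2 * (d / (1 + lamstar) ^ 2) / (n - d / (1 + lamstar) ^ 2))
    = b :=
  optimal_regularization_linear_tradeoff_general n d σ2 b lam lamstar hn hb hlam hlamstar hcond hsc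
end

section
/- Isotropic random features min-norm interpolator, over-parameterized regime: let Λ = I_m with n < m, p > n, and define N(p) = ‖θ*‖²·np/(m(p−n)) + σ²np/((m−n)(p−n)) and R(p) = ‖θ*‖²·p(m−n)/(m(p−n)) + σ²n/(m−n) + σ²n/(p−n). Then for all p > n, R = ((m−n)/n)·N + ((2n−m)/(m−n))·σ². -/
/-- Isotropic random features min-norm interpolator, over-parameterized regime:
linear relation between the deterministic equivalents of risk and norm. -/
theorem rfm_isotropic_overparam_linear
    (m n p b s : ℝ) (hn : 0 < n) (hnm : n < m) (hnp : n < p)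
    (hb : 0 ≤ b) (hs : 0 ≤ s) :
    b * p * (m - n) / (m * (p - n)) + s * n / (m - n) + s * n / (p - n) =
      ((m - n) / n) * (b * n * p / (m * (p - n)) + s * n * p / ((m - n) * (p - n)))
        + ((2 * n - m) / (m - n)) * s := by
  have hm : m ≠ 0 := by linarith
  have hpn : p - n ≠ 0 := by linarith
  have hmn : m - n ≠ 0 := by linarith
  have hn' : n ≠ 0 := ne_of_gt hn
  field_simp
  ring
end
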